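/- arXiv:2512.04241 — 9 statements merged into one kernel-verified Lean document; each statement's English description precedes it below -/
import Mathlib

section
/- If T is a trunk in a neural code C (with ∅ ∈ C), then the map sending each codeword of T to itself and every other codeword of C to ∅ is a surjective morphism from C onto {∅} ∪ T; hence {∅} ∪ T is a minor of C. -/
open Finset

/-- The trunk of `σ` in the code `C`. -/
def trunk (C : Finset (Finset ℕ)) (σ : Finset ℕ) : Finset (Finset ℕ) :=
  C.filter (fun c => σ ⊆ c)

/-- `T` is a proper trunk of the code `C`: a nonempty trunk not equal to `C`. -/
def IsProperTrunkOf (T C : Finset (Finset ℕ)) : Prop :=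
  (∃ σ, T = trunk C σ) ∧ T.Nonempty ∧ T ≠ C

/-- `f` is a morphism of codes from `C` to `D`. -/
def IsMorphism (C D : Finset (Finset ℕ)) (f : Finset ℕ → Finset ℕ) : Prop :=
  (∀ c ∈ C, f c ∈ D) ∧
  ∀ T, IsProperTrunkOf T D → IsProperTrunkOf (C.filter (fun c => f c ∈ T)) C

/-- A code is intersection-complete if closed under pairwise intersections. -/
def IntComplete (C : Finset (Finset ℕ)) : Prop := ∀ a ∈ C, ∀ b ∈ C, a ∩ b ∈ C

/-- `I` is an isolated subset of `C` with minimal element `μ`. -/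
def IsIsolated (C I : Finset (Finset ℕ)) (μ : Finset ℕ) : Prop :=
  I.Nonempty ∧ I ⊆ C ∧ IntComplete I ∧ μ ∈ I ∧ (∀ a ∈ I, μ ⊆ a) ∧
  ∀ c ∈ C, c ∉ I → ∀ τ ∈ I, τ ≠ μ → ¬ τ ⊆ c

theorem trunk_union_empty_is_minor (C : Finset (Finset ℕ)) (hempty : (∅ : Finset ℕ) ∈ C)
    (σ : Finset ℕ) :
    IsMorphism C (insert ∅ (trunk C σ))
      (fun c => if c ∈ trunk C σ then c else ∅) ∧
    ∀ d ∈ insert ∅ (trunk C σ), ∃ c ∈ C,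
      (if c ∈ trunk C σ then c else (∅ : Finset ℕ)) = d := by
  constructor
  · constructor
    · intro c hc
      by_cases h : c ∈ trunk C σ
      · simp [h]
      · simp [h]
    · rintro T ⟨⟨τ, rfl⟩, hne, hneq⟩
      have hτ : τ ≠ ∅ := by
        rintro rfl
        exact hneq (by ext d; simp [trunk])
      refine ⟨⟨σ ∪ τ, ?_⟩, ?_, ?_⟩
      · ext c
        simp only [trunk, Finset.mem_filter, Finset.union_subset_iff]
        constructor
        · rintro ⟨hc, hT⟩
          by_cases h : c ∈ trunk C σ
          · rw [if_pos (Finset.mem_filter.mp h : c ∈ C ∧ σ ⊆ c)] at hT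
            exact ⟨hc, (Finset.mem_filter.mp h).2, hT.2⟩
          · rw [if_neg (fun hp => h (Finset.mem_filter.mpr hp) : ¬(c ∈ C ∧ σ ⊆ c))] at hT
            exact absurd (Finset.subset_empty.mp hT.2) hτ
        · rintro ⟨hc, hσc, hτc⟩
          have hm : c ∈ trunk C σ := Finset.mem_filter.mpr ⟨hc, hσc⟩
          refine ⟨hc, ?_⟩
          rw [if_pos (⟨hc, hσc⟩ : c ∈ C ∧ σ ⊆ c)]
          exact ⟨Finset.mem_insert_of_mem hm, hτc⟩
      · obtain ⟨d, hd⟩ := hne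
        rw [trunk, Finset.mem_filter] at hd
        obtain ⟨hdD, hτd⟩ := hd
        have hdne : d ≠ ∅ := fun h => hτ (Finset.subset_empty.mp (h ▸ hτd))
        have hdt : d ∈ trunk C σ := (Finset.mem_insert.mp hdD).resolve_left hdne
        refine ⟨d, Finset.mem_filter.mpr ⟨(Finset.mem_filter.mp hdt).1, ?_⟩⟩
        show (if d ∈ trunk C σ then d else ∅) ∈ _
        rw [if_pos hdt]
        exact Finset.mem_filter.mpr ⟨hdD, hτd⟩
      · intro h
        have hmem : (∅ : Finset ℕ) ∈ C.filter (fun c => (fun c => if c ∈ trunk C σ then c else ∅) c ∈ trunk (insert ∅ (trunk C σ)) τ) := by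
          rw [h]; exact hempty
        have := (Finset.mem_filter.mp hmem).2
        simp only [trunk, Finset.mem_filter] at this
        split at this <;> exact hτ (Finset.subset_empty.mp this.2)
  · intro d hd
    rcases Finset.mem_insert.mp hd with rfl | hdt
    · refine ⟨∅, hempty, ?_⟩
      split <;> rfl
    · exact ⟨d, (Finset.mem_filter.mp hdt).1, by simp [hdt]⟩
end

section
/- A neural code C is intersection-complete if and only if the assignment σ ↦ Tk_C(σ) defines a bijection between codewords of C and nonempty trunks in C. -/
open Finset

/-! Distinct codewords have distinct trunks, since a codeword is the least element of its own
trunk. For surjectivity, the intersection of all codewords of a nonempty trunk has that same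
trunk, and intersection-completeness makes it a codeword. Conversely, if `Tk_C(a ∩ b)` is the
trunk of a codeword `c`, then `c` contains `a ∩ b` and is contained in `a` and in `b`, so
`c = a ∩ b`. -/

def nonemptyTrunks (C : Finset (Finset ℕ)) : Set (Finset (Finset ℕ)) :=
  {T | (∃ σ, T = trunk C σ) ∧ T.Nonempty}

section Trunk

variable {C : Finset (Finset ℕ)}

lemma mem_trunk {σ c : Finset ℕ} : c ∈ trunk C σ ↔ c ∈ C ∧ σ ⊆ c := mem_filter

lemma mem_trunk_self {c : Finset ℕ} (hc : c ∈ C) : c ∈ trunk C c := mem_trunk.2 ⟨hc, subset_rfl⟩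

lemma mapsTo_trunk_nonemptyTrunks : Set.MapsTo (trunk C) C (nonemptyTrunks C) :=
  fun _ hc => ⟨⟨_, rfl⟩, ⟨_, mem_trunk_self hc⟩⟩

lemma subset_of_trunk_eq {c σ x : Finset ℕ} (h : trunk C c = trunk C σ) (hx : x ∈ C)
    (hσx : σ ⊆ x) : c ⊆ x :=
  (mem_trunk.1 (h ▸ mem_trunk.2 ⟨hx, hσx⟩ : x ∈ trunk C c)).2

lemma injOn_trunk : Set.InjOn (trunk C) C := fun _ ha _ hb h =>
  subset_antisymm (subset_of_trunk_eq h hb subset_rfl) (subset_of_trunk_eq h.symm ha subset_rfl)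

lemma trunk_inf'_trunk {σ : Finset ℕ} (h : (trunk C σ).Nonempty) :
    trunk C ((trunk C σ).inf' h id) = trunk C σ := by
  have hσ : σ ⊆ (trunk C σ).inf' h id := le_inf' h id fun _ hb => (mem_trunk.1 hb).2
  ext x
  simp only [mem_trunk]
  exact ⟨fun ⟨hx, hinf⟩ => ⟨hx, hσ.trans hinf⟩,
    fun ⟨hx, hσx⟩ => ⟨hx, inf'_le id (mem_trunk.2 ⟨hx, hσx⟩)⟩⟩

lemma IntComplete.surjOn_trunk (hC : IntComplete C) :
    Set.SurjOn (trunk C) C (nonemptyTrunks C) := by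
  rintro _ ⟨⟨σ, rfl⟩, h⟩
  exact ⟨_, inf'_mem (C : Set (Finset ℕ)) hC _ h id fun _ hb => (mem_trunk.1 hb).1,
    trunk_inf'_trunk h⟩

lemma intComplete_of_surjOn_trunk (h : Set.SurjOn (trunk C) C (nonemptyTrunks C)) :
    IntComplete C := by
  intro a ha b hb
  obtain ⟨c, hc, htrunk⟩ := h ⟨⟨a ∩ b, rfl⟩, ⟨a, mem_trunk.2 ⟨ha, inter_subset_left⟩⟩⟩
  have hle : a ∩ b ⊆ c := (mem_trunk.1 (htrunk ▸ mem_trunk_self hc)).2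
  have hge : c ⊆ a ∩ b := subset_inter (subset_of_trunk_eq htrunk ha inter_subset_left)
    (subset_of_trunk_eq htrunk hb inter_subset_right)
  rwa [← subset_antisymm hge hle]

end Trunk

theorem intComplete_iff_trunk_bijection (C : Finset (Finset ℕ)) :
    IntComplete C ↔
      Set.BijOn (fun σ => trunk C σ) (↑C)
        {T : Finset (Finset ℕ) | (∃ σ, T = trunk C σ) ∧ T.Nonempty} := by
  exact ⟨fun hC => ⟨mapsTo_trunk_nonemptyTrunks, injOn_trunk, hC.surjOn_trunk⟩,
    fun h => intComplete_of_surjOn_trunk h.surjOn⟩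
end

section
/- Let C be an intersection-complete code and I ⊆ C an isolated subset with minimal element μ. Then the code {μ} ∪ (C \ I) is intersection-complete. -/
open Finset

theorem intComplete_without_isolated (C I : Finset (Finset ℕ)) (μ : Finset ℕ)
    (hC : IntComplete C) (hI : IsIsolated C I μ) :
    IntComplete (insert μ (C \ I)) := by
  obtain ⟨hne, hIC, hIint, hμI, hμmin, hiso⟩ := hI
  have hμC : μ ∈ C := hIC hμI
  -- helper: intersection of μ with anything in C\I
  intro a ha b hb
  simp only [mem_insert, mem_sdiff] at ha hb ⊢
  have key : ∀ x, x ∈ C → x ∉ I → ∀ y, y ∈ C → y ∩ x ∈ I → y ∩ x = μ := by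
    intro x hxC hxI y hyC hyI
    by_contra hne'
    exact hiso x hxC hxI (y ∩ x) hyI hne' inter_subset_right
  rcases ha with rfl | ⟨haC, haI⟩
  · rcases hb with rfl | ⟨hbC, hbI⟩
    · left; simp
    · by_cases h : a ∩ b ∈ I
      · left; exact subset_antisymm inter_subset_left (hμmin _ h)
      · right; exact ⟨hC _ (hIC hμI) _ hbC, h⟩
  · rcases hb with rfl | ⟨hbC, hbI⟩
    · by_cases h : a ∩ b ∈ I
      · left; exact subset_antisymm inter_subset_right (hμmin _ h)
      · right; exact ⟨hC _ haC _ (hIC hμI), h⟩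
    · by_cases h : a ∩ b ∈ I
      · left; exact key b hbC hbI a haC h
      · right; exact ⟨hC _ haC _ hbC, h⟩
end

section
/- Let C ⊆ 2^[n] be an intersection-complete code and I ⊆ C an isolated subset with minimal element μ. Then the code C_[I] = {μ} ∪ (C \ I) ∪ {c ∪ {α} | c ∈ I}, where α = n+1 is a new neuron, is intersection-complete. -/
open Finset

theorem intComplete_covering_code (n : ℕ) (C I : Finset (Finset ℕ)) (μ : Finset ℕ)
    (hn : ∀ c ∈ C, c ⊆ Finset.range n)
    (hC : IntComplete C) (hI : IsIsolated C I μ) :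
    IntComplete (insert μ (C \ I) ∪ I.image (fun c => insert n c)) := by

  obtain ⟨hIne, hIC, hIint, hmu, hmin, hiso⟩ := hI
  have hnC : ∀ c ∈ C, n ∉ c := fun c hc hnc =>
    absurd (Finset.mem_range.mp (hn c hc hnc)) (lt_irrefl n)
  -- membership characterization
  have hmem : ∀ x, x ∈ insert μ (C \ I) ∪ I.image (fun c => insert n c) ↔
      (x = μ ∨ (x ∈ C ∧ x ∉ I) ∨ ∃ c ∈ I, insert n c = x) := by
    intro x
    simp [Finset.mem_union, Finset.mem_insert, Finset.mem_sdiff, Finset.mem_image]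
  -- key: if x ∈ C and x ⊆ w for some w ∈ C \ I, then x ∈ D
  have key : ∀ x ∈ C, ∀ w ∈ C, w ∉ I → x ⊆ w →
      (x = μ ∨ (x ∈ C ∧ x ∉ I) ∨ ∃ c ∈ I, insert n c = x) := by
    intro x hx w hw hwI hxw
    by_cases hxI : x ∈ I
    · left
      by_contra hne
      exact hiso w hw hwI x hxI hne hxw
    · exact Or.inr (Or.inl ⟨hx, hxI⟩)
  intro a ha b hb
  rw [hmem] at ha hb ⊢
  have hmuC : μ ∈ C := hIC hmu
  rcases ha with rfl | ⟨haC, haI⟩ | ⟨c, hc, rfl⟩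
  · rcases hb with rfl | ⟨hbC, hbI⟩ | ⟨d, hd, rfl⟩
    · left; exact Finset.inter_self _
    · exact key _ (hC _ hmuC _ hbC) _ hbC hbI inter_subset_right
    · left
      have hnd : n ∉ a := hnC _ hmuC
      have : a ∩ insert n d = a ∩ d := by
        ext y; simp only [Finset.mem_inter, Finset.mem_insert]
        constructor
        · rintro ⟨hy, rfl | hy2⟩
          · exact absurd hy hnd
          · exact ⟨hy, hy2⟩
        · rintro ⟨hy, hy2⟩; exact ⟨hy, Or.inr hy2⟩
      rw [this, Finset.inter_eq_left.mpr (hmin d hd)]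
  · rcases hb with rfl | ⟨hbC, hbI⟩ | ⟨d, hd, rfl⟩
    · exact key _ (hC _ haC _ (hIC hmu)) _ haC haI inter_subset_left
    · exact key _ (hC _ haC _ hbC) _ haC haI inter_subset_left
    · have hna : n ∉ a := hnC _ haC
      have heq : a ∩ insert n d = a ∩ d := by
        ext y; simp only [Finset.mem_inter, Finset.mem_insert]
        constructor
        · rintro ⟨hy, rfl | hy2⟩
          · exact absurd hy hna
          · exact ⟨hy, hy2⟩
        · rintro ⟨hy, hy2⟩; exact ⟨hy, Or.inr hy2⟩
      rw [heq]
      exact key _ (hC _ haC _ (hIC hd)) _ haC haI inter_subset_left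
  · rcases hb with rfl | ⟨hbC, hbI⟩ | ⟨d, hd, rfl⟩
    · left
      have hnb : n ∉ b := hnC _ hmuC
      have : insert n c ∩ b = c ∩ b := by
        ext y; simp only [Finset.mem_inter, Finset.mem_insert]
        constructor
        · rintro ⟨rfl | hy, hy2⟩
          · exact absurd hy2 hnb
          · exact ⟨hy, hy2⟩
        · rintro ⟨hy, hy2⟩; exact ⟨Or.inr hy, hy2⟩
      rw [this, Finset.inter_eq_right.mpr (hmin c hc)]
    · have hnb : n ∉ b := hnC _ hbC
      have heq : insert n c ∩ b = c ∩ b := by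
        ext y; simp only [Finset.mem_inter, Finset.mem_insert]
        constructor
        · rintro ⟨rfl | hy, hy2⟩
          · exact absurd hy2 hnb
          · exact ⟨hy, hy2⟩
        · rintro ⟨hy, hy2⟩; exact ⟨Or.inr hy, hy2⟩
      rw [heq]
      exact key _ (hC _ (hIC hc) _ hbC) _ hbC hbI inter_subset_right
    · right; right
      refine ⟨c ∩ d, hIint _ hc _ hd, ?_⟩
      ext y
      simp only [Finset.mem_inter, Finset.mem_insert]
      tauto
end

section
/- Let C ⊆ 2^[n] be a code with a redundant neuron i, and let D = {c \ {i} | c ∈ C}. Then the map f : C → D given by f(c) = c \ {i} is a bijective morphism, and C and D have the same number of trunks. -/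
open Finset

theorem delete_redundant_neuron (n : ℕ) (C : Finset (Finset ℕ)) (i : ℕ)
    (hc : ∀ c ∈ C, c ⊆ Finset.range n) (hi : i < n)
    (hred : ∃ σ : Finset ℕ, σ ⊆ Finset.range n ∧ i ∉ σ ∧ trunk C {i} = trunk C σ) :
    IsMorphism C (C.image (fun c => c.erase i)) (fun c => c.erase i) ∧
    Set.BijOn (fun c : Finset ℕ => c.erase i) (↑C : Set (Finset ℕ))
      (↑(C.image (fun c => c.erase i)) : Set (Finset ℕ)) ∧
    {T : Finset (Finset ℕ) | ∃ σ, T = trunk C σ}.ncard =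
      {T : Finset (Finset ℕ) | ∃ σ, T = trunk (C.image (fun c => c.erase i)) σ}.ncard := by
  obtain ⟨σ₀, hσ₀n, hiσ₀, htr⟩ := hred
  set D := C.image (fun c => c.erase i) with hD
  have hkey : ∀ c ∈ C, (i ∈ c ↔ σ₀ ⊆ c) := by
    intro c hcC
    constructor
    · intro h
      have h1 : c ∈ trunk C {i} := by
        simp [trunk, hcC, Finset.singleton_subset_iff, h]
      rw [htr] at h1
      exact (Finset.mem_filter.mp h1).2
    · intro h
      have h1 : c ∈ trunk C σ₀ := by simp [trunk, hcC, h]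
      rw [← htr] at h1
      exact Finset.singleton_subset_iff.mp (Finset.mem_filter.mp h1).2
  have hinj : ∀ c ∈ C, ∀ c' ∈ C, c.erase i = c'.erase i → c = c' := by
    intro c hcC c' hc'C he
    have h1 : (i ∈ c ↔ i ∈ c') := by
      rw [hkey c hcC, hkey c' hc'C]
      constructor
      · intro h
        have h2 : σ₀ ⊆ c.erase i := Finset.subset_erase.mpr ⟨h, hiσ₀⟩
        rw [he] at h2
        exact h2.trans (Finset.erase_subset _ _)
      · intro h
        have h2 : σ₀ ⊆ c'.erase i := Finset.subset_erase.mpr ⟨h, hiσ₀⟩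
        rw [← he] at h2
        exact h2.trans (Finset.erase_subset _ _)
    ext j
    by_cases hj : j = i
    · subst hj; exact h1
    · constructor
      · intro h
        have h2 : j ∈ c.erase i := Finset.mem_erase.mpr ⟨hj, h⟩
        rw [he] at h2; exact (Finset.mem_erase.mp h2).2
      · intro h
        have h2 : j ∈ c'.erase i := Finset.mem_erase.mpr ⟨hj, h⟩
        rw [← he] at h2; exact (Finset.mem_erase.mp h2).2
  have himg : ∀ σ : Finset ℕ, i ∉ σ →
      trunk D σ = (trunk C σ).image (fun c => c.erase i) := by
    intro σ hiσ
    ext d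
    simp only [trunk, Finset.mem_filter, Finset.mem_image, hD]
    constructor
    · rintro ⟨⟨c, hcC, rfl⟩, hsub⟩
      exact ⟨c, ⟨hcC, (Finset.subset_erase.mp hsub).1⟩, rfl⟩
    · rintro ⟨c, ⟨hcC, hsub⟩, rfl⟩
      exact ⟨⟨c, hcC, rfl⟩, Finset.subset_erase.mpr ⟨hsub, hiσ⟩⟩
  have hDempty : ∀ σ : Finset ℕ, i ∈ σ → trunk D σ = ∅ := by
    intro σ hiσ
    rw [Finset.eq_empty_iff_forall_notMem]
    intro d hd
    simp only [trunk, Finset.mem_filter, hD, Finset.mem_image] at hd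
    obtain ⟨⟨c, _, rfl⟩, hsub⟩ := hd
    exact (Finset.notMem_erase i c) (hsub hiσ)
  have hCn : trunk C {n} = ∅ := by
    rw [Finset.eq_empty_iff_forall_notMem]
    intro c hcmem
    simp only [trunk, Finset.mem_filter, Finset.singleton_subset_iff] at hcmem
    exact absurd (Finset.mem_range.mp (hc c hcmem.1 hcmem.2)) (lt_irrefl n)
  have hnorm : ∀ σ : Finset ℕ, ∃ σ', i ∉ σ' ∧ trunk C σ = trunk C σ' := by
    intro σ
    by_cases hiσ : i ∈ σ
    · refine ⟨σ.erase i ∪ σ₀, by simp [hiσ₀], ?_⟩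
      ext c
      simp only [trunk, Finset.mem_filter, Finset.union_subset_iff]
      constructor
      · rintro ⟨hcC, hsub⟩
        exact ⟨hcC, (Finset.erase_subset _ _).trans hsub, (hkey c hcC).1 (hsub hiσ)⟩
      · rintro ⟨hcC, h1, h2⟩
        refine ⟨hcC, fun j hj => ?_⟩
        by_cases hji : j = i
        · subst hji; exact (hkey c hcC).2 h2
        · exact h1 (Finset.mem_erase.mpr ⟨hji, hj⟩)
    · exact ⟨σ, hiσ, rfl⟩
  have himginj : ∀ T₁ T₂ : Finset (Finset ℕ), T₁ ⊆ C → T₂ ⊆ C →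
      T₁.image (fun c => c.erase i) = T₂.image (fun c => c.erase i) → T₁ = T₂ := by
    intro T₁ T₂ h1 h2 he
    ext c
    constructor
    · intro hcT
      have hm : c.erase i ∈ T₂.image (fun c => c.erase i) :=
        he ▸ Finset.mem_image_of_mem _ hcT
      obtain ⟨c', hc', heq⟩ := Finset.mem_image.mp hm
      exact (hinj c' (h2 hc') c (h1 hcT) heq) ▸ hc'
    · intro hcT
      have hm : c.erase i ∈ T₁.image (fun c => c.erase i) :=
        he.symm ▸ Finset.mem_image_of_mem _ hcT
      obtain ⟨c', hc', heq⟩ := Finset.mem_image.mp hm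
      exact (hinj c' (h1 hc') c (h2 hcT) heq) ▸ hc'
  refine ⟨⟨fun c hcC => Finset.mem_image_of_mem _ hcC, ?_⟩, ?_, ?_⟩
  · rintro T ⟨⟨τ, rfl⟩, hne, hneq⟩
    by_cases hiτ : i ∈ τ
    · rw [hDempty τ hiτ] at hne
      exact absurd hne (by simp)
    · have hfilter : C.filter (fun c => c.erase i ∈ trunk D τ) = trunk C τ := by
        ext c
        simp only [Finset.mem_filter, trunk, hD, Finset.mem_image]
        constructor
        · rintro ⟨hcC, _, hsub⟩
          exact ⟨hcC, (Finset.subset_erase.mp hsub).1⟩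
        · rintro ⟨hcC, hsub⟩
          exact ⟨hcC, ⟨c, hcC, rfl⟩, Finset.subset_erase.mpr ⟨hsub, hiτ⟩⟩
      refine ⟨⟨τ, hfilter⟩, ?_, ?_⟩
      · obtain ⟨d, hd⟩ := hne
        simp only [trunk, Finset.mem_filter, hD, Finset.mem_image] at hd
        obtain ⟨⟨c, hcC, rfl⟩, hsub⟩ := hd
        refine ⟨c, ?_⟩
        rw [hfilter]
        exact Finset.mem_filter.mpr ⟨hcC, (Finset.subset_erase.mp hsub).1⟩
      · intro h
        apply hneq
        rw [hfilter] at h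
        rw [himg τ hiτ, h]
  · refine ⟨fun c hcC => ?_, fun c hcC c' hc' he => hinj c hcC c' hc' he, ?_⟩
    · exact Finset.mem_coe.mpr (Finset.mem_image_of_mem _ hcC)
    · intro d hd
      rw [hD] at hd
      rwa [Finset.coe_image] at hd
  · have hset : {T : Finset (Finset ℕ) | ∃ σ, T = trunk D σ} =
        (fun T : Finset (Finset ℕ) => T.image (fun c => c.erase i)) ''
          {T | ∃ σ, T = trunk C σ} := by
      ext T
      simp only [Set.mem_setOf_eq, Set.mem_image]
      constructor
      · rintro ⟨σ, rfl⟩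
        by_cases hiσ : i ∈ σ
        · exact ⟨trunk C {n}, ⟨{n}, rfl⟩, by rw [hCn, hDempty σ hiσ]; simp⟩
        · exact ⟨trunk C σ, ⟨σ, rfl⟩, (himg σ hiσ).symm⟩
      · rintro ⟨T', ⟨σ, rfl⟩, rfl⟩
        obtain ⟨σ', hiσ', heq⟩ := hnorm σ
        exact ⟨σ', by rw [heq, himg σ' hiσ']⟩
    rw [hset]
    refine (Set.ncard_image_of_injOn ?_).symm
    rintro T₁ ⟨σ₁, rfl⟩ T₂ ⟨σ₂, rfl⟩ he
    exact himginj _ _ (Finset.filter_subset _ _) (Finset.filter_subset _ _) he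
end

section
/- Let C ⊆ 2^[n] be intersection-complete and i ∈ [n] a non-redundant, nontrivial neuron. Let μ be the minimal element of Tk_C(i) (the intersection of all codewords containing i). Then μ \ {i} is also a codeword of C. -/
open Finset

theorem erase_min_is_codeword (n : ℕ) (C : Finset (Finset ℕ)) (i : ℕ) (μ : Finset ℕ)
    (hc : ∀ c ∈ C, c ⊆ Finset.range n) (hi : i < n)
    (hC : IntComplete C)
    (hnontrivial : (trunk C {i}).Nonempty)
    (hnonredundant : ¬ ∃ σ : Finset ℕ, σ ⊆ Finset.range n ∧ i ∉ σ ∧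
      trunk C {i} = trunk C σ)
    (hμmem : μ ∈ trunk C {i}) (hμmin : ∀ a ∈ trunk C {i}, μ ⊆ a) :
    μ.erase i ∈ C := by
  push_neg at hnonredundant
  have hμC : μ ∈ C := (mem_filter.mp hμmem).1
  have hσ : μ.erase i ⊆ Finset.range n := (erase_subset _ _).trans (hc μ hμC)
  have hne := hnonredundant (μ.erase i) hσ (notMem_erase i μ)
  have hsub : trunk C {i} ⊆ trunk C (μ.erase i) := by
    intro c hcmem
    rw [trunk, mem_filter] at hcmem ⊢
    exact ⟨hcmem.1, (erase_subset _ _).trans (hμmin c (by rw [trunk, mem_filter]; exact hcmem))⟩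
  obtain ⟨c, hcT, hcN⟩ : ∃ c, c ∈ trunk C (μ.erase i) ∧ c ∉ trunk C {i} := by
    by_contra h
    push_neg at h
    exact hne (Subset.antisymm hsub h)
  rw [trunk, mem_filter] at hcT hcN
  push_neg at hcN
  have hic : i ∉ c := by
    intro hic
    exact absurd (singleton_subset_iff.mpr hic) (hcN hcT.1)
  have hkey : μ ∩ c = μ.erase i := by
    apply Subset.antisymm
    · intro x hx
      rw [mem_inter] at hx
      rw [mem_erase]
      exact ⟨fun h => hic (h ▸ hx.2), hx.1⟩
    · intro x hx
      rw [mem_inter]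
      exact ⟨mem_of_mem_erase hx, hcT.2 hx⟩
  rw [← hkey]
  exact hC μ hμC c hcT.1
end

section
/- Let C, D, E be neural codes and let f : C → D and g : C → E be surjective morphisms determined by collections of trunks A and B, respectively. If every trunk in B is generated by A (i.e., is an intersection of members of A, with empty intersection equal to C), then there exists a surjective morphism h : D → E with g = h ∘ f. -/
open Finset

theorem factor_through (m p : ℕ) (C : Finset (Finset ℕ))
    (σA σB : ℕ → Finset ℕ)
    (hA : ∀ j ∈ Finset.range m, IsProperTrunkOf (trunk C (σA j)) C)
    (hB : ∀ k ∈ Finset.range p, IsProperTrunkOf (trunk C (σB k)) C)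
    (hgen : ∀ k ∈ Finset.range p, ∃ s : Finset ℕ, s ⊆ Finset.range m ∧
      trunk C (σB k) = C.filter (fun c => ∀ j ∈ s, c ∈ trunk C (σA j))) :
    ∃ h : Finset ℕ → Finset ℕ,
      IsMorphism (C.image (fun c => (Finset.range m).filter (fun j => c ∈ trunk C (σA j))))
        (C.image (fun c => (Finset.range p).filter (fun k => c ∈ trunk C (σB k)))) h ∧
      (∀ e ∈ C.image (fun c => (Finset.range p).filter (fun k => c ∈ trunk C (σB k))),
        ∃ d ∈ C.image (fun c => (Finset.range m).filter (fun j => c ∈ trunk C (σA j))),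
          h d = e) ∧
      ∀ c ∈ C, h ((Finset.range m).filter (fun j => c ∈ trunk C (σA j))) =
        (Finset.range p).filter (fun k => c ∈ trunk C (σB k)) := by
  classical
  have hgen' : ∀ k : ℕ, ∃ s : Finset ℕ, k ∈ Finset.range p →
      (s ⊆ Finset.range m ∧
        trunk C (σB k) = C.filter (fun c => ∀ j ∈ s, c ∈ trunk C (σA j))) := by
    intro k
    by_cases hk : k ∈ Finset.range p
    · exact ⟨(hgen k hk).choose, fun _ => (hgen k hk).choose_spec⟩
    · exact ⟨∅, fun hk' => absurd hk' hk⟩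
  choose s hs using hgen'
  set fD : Finset ℕ → Finset ℕ :=
    fun c => (Finset.range m).filter (fun j => c ∈ trunk C (σA j)) with hfD
  set fE : Finset ℕ → Finset ℕ :=
    fun c => (Finset.range p).filter (fun k => c ∈ trunk C (σB k)) with hfE
  set D := C.image fD with hD
  set E := C.image fE with hE
  set h : Finset ℕ → Finset ℕ := fun d => (Finset.range p).filter (fun k => s k ⊆ d) with hh
  -- key commuting lemma
  have key : ∀ c ∈ C, h (fD c) = fE c := by
    intro c hc
    ext k
    simp only [hh, hfD, hfE, mem_filter]
    constructor
    · rintro ⟨hk, hsk⟩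
      refine ⟨hk, ?_⟩
      rw [(hs k hk).2, mem_filter]
      refine ⟨hc, fun j hj => (mem_filter.mp (hsk hj)).2⟩
    · rintro ⟨hk, hck⟩
      refine ⟨hk, fun j hj => ?_⟩
      rw [(hs k hk).2, mem_filter] at hck
      exact mem_filter.mpr ⟨(hs k hk).1 hj, hck.2 j hj⟩
  have hmapsto : ∀ d ∈ D, h d ∈ E := by
    intro d hd
    obtain ⟨c, hc, rfl⟩ := mem_image.mp hd
    rw [key c hc]
    exact mem_image_of_mem _ hc
  refine ⟨h, ⟨hmapsto, ?_⟩, ?_, key⟩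
  · -- preimages of proper trunks
    rintro T ⟨⟨τ, rfl⟩, hne, hneq⟩
    obtain ⟨e0, he0⟩ := hne
    have he0E : e0 ∈ E := mem_of_mem_filter _ he0
    have hτe0 : τ ⊆ e0 := (mem_filter.mp he0).2
    have hτp : τ ⊆ Finset.range p := by
      obtain ⟨c0, _, rfl⟩ := mem_image.mp he0E
      exact hτe0.trans (filter_subset _ _)
    have heq : D.filter (fun d => h d ∈ trunk E τ) = trunk D (τ.biUnion s) := by
      ext d
      simp only [mem_filter, trunk]
      constructor
      · rintro ⟨hd, _, hτhd⟩
        refine ⟨hd, biUnion_subset.mpr fun k hk => ?_⟩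
        exact (mem_filter.mp (hτhd hk)).2
      · rintro ⟨hd, hsub⟩
        refine ⟨hd, hmapsto d hd, fun k hk => ?_⟩
        exact mem_filter.mpr ⟨hτp hk, (subset_biUnion_of_mem s hk).trans hsub⟩
    rw [trunk] at heq
    refine ⟨⟨τ.biUnion s, heq⟩, ?_, ?_⟩
    · -- nonempty
      obtain ⟨c0, hc0, rfl⟩ := mem_image.mp he0E
      exact ⟨fD c0, mem_filter.mpr ⟨mem_image_of_mem _ hc0, by rw [key c0 hc0]; exact he0⟩⟩
    · -- proper
      have hTE : trunk E τ ⊆ E := filter_subset _ _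
      have : ∃ e ∈ E, e ∉ trunk E τ := by
        by_contra hcon
        push_neg at hcon
        exact hneq (Subset.antisymm hTE hcon)
      obtain ⟨e1, he1E, he1T⟩ := this
      obtain ⟨c1, hc1, rfl⟩ := mem_image.mp he1E
      intro hEq
      have : fD c1 ∈ D.filter (fun d => h d ∈ trunk E τ) := by
        rw [hEq]; exact mem_image_of_mem _ hc1
      rw [mem_filter, key c1 hc1] at this
      exact he1T this.2
  · -- surjectivity onto E
    intro e he
    obtain ⟨c, hc, rfl⟩ := mem_image.mp he
    exact ⟨fD c, mem_image_of_mem _ hc, key c hc⟩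
end

section
/- Let C ⊆ 2^[n] be intersection-complete, i ∈ [n] a non-redundant nontrivial neuron, μ the minimal element of Tk_C(i), and f : C → C^(i) the natural surjective morphism determined by the trunks {T_j | T_j ≠ T_i} ∪ {T_j ∩ T_i | T_j ∩ T_i ≠ T_i}. Then f(μ) = f(μ \ {i}), and f is injective on C \ {μ}. -/
open Finset

/-- The map determining the `i`-th covered code. -/
def coveredMap (n i : ℕ) (C : Finset (Finset ℕ)) (c : Finset ℕ) : Finset ℕ :=
  ((Finset.range n).filter (fun j => trunk C {j} ≠ trunk C {i} ∧ j ∈ c)) ∪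
    (((Finset.range n).filter
        (fun j => trunk C {j} ∩ trunk C {i} ≠ trunk C {i} ∧ j ∈ c ∧ i ∈ c)).image
      (fun j => n + j))

lemma mem_coveredMap_lt {n i : ℕ} {C : Finset (Finset ℕ)} {c : Finset ℕ} {j : ℕ}
    (hj : j < n) :
    j ∈ coveredMap n i C c ↔ (trunk C {j} ≠ trunk C {i} ∧ j ∈ c) := by
  simp only [coveredMap, Finset.mem_union, Finset.mem_filter, Finset.mem_image,
    Finset.mem_range]
  constructor
  · rintro (⟨_, h⟩ | ⟨k, ⟨hk, _⟩, hkj⟩)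
    · exact h
    · omega
  · intro h
    exact Or.inl ⟨hj, h⟩

lemma mem_coveredMap_add {n i : ℕ} {C : Finset (Finset ℕ)} {c : Finset ℕ} {j : ℕ}
    (hj : j < n) :
    n + j ∈ coveredMap n i C c ↔
      (trunk C {j} ∩ trunk C {i} ≠ trunk C {i} ∧ j ∈ c ∧ i ∈ c) := by
  simp only [coveredMap, Finset.mem_union, Finset.mem_filter, Finset.mem_image,
    Finset.mem_range]
  constructor
  · rintro (⟨h, _⟩ | ⟨k, ⟨hk, hcond⟩, hkj⟩)
    · omega
    · have hkj' : k = j := by omega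
      subst hkj'
      exact hcond
  · intro h
    exact Or.inr ⟨j, ⟨hj, h⟩, rfl⟩

theorem covered_map_almost_injective (n : ℕ) (C : Finset (Finset ℕ)) (i : ℕ)
    (μ : Finset ℕ)
    (hc : ∀ c ∈ C, c ⊆ Finset.range n) (hi : i < n)
    (hC : IntComplete C)
    (hnontrivial : (trunk C {i}).Nonempty)
    (hnonredundant : ¬ ∃ σ : Finset ℕ, σ ⊆ Finset.range n ∧ i ∉ σ ∧
      trunk C {i} = trunk C σ)
    (hμmem : μ ∈ trunk C {i}) (hμmin : ∀ a ∈ trunk C {i}, μ ⊆ a) :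
    coveredMap n i C μ = coveredMap n i C (μ.erase i) ∧
    Set.InjOn (coveredMap n i C) (↑C \ {μ}) := by
  have hiμ : i ∈ μ := singleton_subset_iff.mp (Finset.mem_filter.mp hμmem).2
  have key : ∀ j ∈ μ, trunk C {j} ∩ trunk C {i} = trunk C {i} := by
    intro j hj
    refine Finset.Subset.antisymm Finset.inter_subset_right (fun c hcT => ?_)
    refine Finset.mem_inter.mpr ⟨?_, hcT⟩
    exact Finset.mem_filter.mpr ⟨(Finset.mem_filter.mp hcT).1,
      singleton_subset_iff.mpr (hμmin c hcT hj)⟩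
  constructor
  · ext x
    simp only [coveredMap, Finset.mem_union, Finset.mem_filter, Finset.mem_image,
      Finset.mem_range, Finset.mem_erase]
    constructor
    · rintro (⟨hx, hne, hxμ⟩ | ⟨k, ⟨hk, hcond, hkμ, _⟩, hkx⟩)
      · left
        exact ⟨hx, hne, fun h => hne (by rw [h]), hxμ⟩
      · exact absurd (key k hkμ) hcond
    · rintro (⟨hx, hne, _, hxμ⟩ | ⟨k, ⟨hk, hcond, ⟨_, hkμ⟩, _⟩, hkx⟩)
      · exact Or.inl ⟨hx, hne, hxμ⟩
      · exact absurd (key k hkμ) hcond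
  · intro c hc' d hd' hfcd
    simp only [Set.mem_diff, Set.mem_singleton_iff, Finset.mem_coe] at hc' hd'
    obtain ⟨hcC, hcμ⟩ := hc'
    obtain ⟨hdC, hdμ⟩ := hd'
    have crux : ∀ a b : Finset ℕ, a ∈ C → a ≠ μ → b ∈ C →
        coveredMap n i C a = coveredMap n i C b → i ∈ a → i ∈ b := by
      intro a b haC haμ hbC hab hia
      have haT : a ∈ trunk C {i} :=
        Finset.mem_filter.mpr ⟨haC, singleton_subset_iff.mpr hia⟩
      have hμa : μ ⊆ a := hμmin a haT
      have hex : ∃ j ∈ a, j ∉ μ := by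
        by_contra h
        push_neg at h
        exact haμ (Finset.Subset.antisymm h hμa)
      obtain ⟨j, hja, hjμ⟩ := hex
      have hjn : j < n := Finset.mem_range.mp (hc a haC hja)
      have hTj : trunk C {j} ∩ trunk C {i} ≠ trunk C {i} := by
        intro heq
        have hμin : μ ∈ trunk C {j} ∩ trunk C {i} := by rw [heq]; exact hμmem
        exact hjμ (singleton_subset_iff.mp
          (Finset.mem_filter.mp (Finset.mem_inter.mp hμin).1).2)
      have hmem : n + j ∈ coveredMap n i C a :=
        (mem_coveredMap_add hjn).mpr ⟨hTj, hja, hia⟩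
      rw [hab] at hmem
      exact ((mem_coveredMap_add hjn).mp hmem).2.2
    have step : ∀ a b : Finset ℕ, a ∈ C → a ≠ μ → b ∈ C →
        coveredMap n i C a = coveredMap n i C b → a ⊆ b := by
      intro a b haC haμ hbC hab j hja
      have hjn : j < n := Finset.mem_range.mp (hc a haC hja)
      by_cases hT : trunk C {j} = trunk C {i}
      · have hia : i ∈ a := by
          have ha' : a ∈ trunk C {j} :=
            Finset.mem_filter.mpr ⟨haC, singleton_subset_iff.mpr hja⟩
          rw [hT] at ha'
          exact singleton_subset_iff.mp (Finset.mem_filter.mp ha').2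
        have hib : i ∈ b := crux a b haC haμ hbC hab hia
        have hjμ' : j ∈ μ := by
          have hm : μ ∈ trunk C {j} := by rw [hT]; exact hμmem
          exact singleton_subset_iff.mp (Finset.mem_filter.mp hm).2
        exact hμmin b (Finset.mem_filter.mpr ⟨hbC, singleton_subset_iff.mpr hib⟩) hjμ'
      · have hmem : j ∈ coveredMap n i C a := (mem_coveredMap_lt hjn).mpr ⟨hT, hja⟩
        rw [hab] at hmem
        exact ((mem_coveredMap_lt hjn).mp hmem).2
    exact Finset.Subset.antisymm (step c d hcC hcμ hdC hfcd)
      (step d c hdC hdμ hcC hfcd.symm)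
end

section
/- Let C be an intersection-complete code and I ⊆ C an isolated subset with minimal element μ. Then the map g : C_[I] → C that deletes the new neuron α from each codeword is a surjective morphism, and it is bijective except that it identifies the two codewords μ and μ ∪ {α}. -/
open Finset

theorem delete_alpha_surjective_morphism (n : ℕ) (C I : Finset (Finset ℕ)) (μ : Finset ℕ)
    (hn : ∀ c ∈ C, c ⊆ Finset.range n)
    (hC : IntComplete C) (hI : IsIsolated C I μ) :
    IsMorphism (insert μ (C \ I) ∪ I.image (fun c => insert n c)) C
      (fun c => c.erase n) ∧
    (∀ d ∈ C, ∃ c ∈ insert μ (C \ I) ∪ I.image (fun c => insert n c), c.erase n = d) ∧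
    (∀ c₁ ∈ insert μ (C \ I) ∪ I.image (fun c => insert n c),
      ∀ c₂ ∈ insert μ (C \ I) ∪ I.image (fun c => insert n c),
        c₁ ≠ c₂ → c₁.erase n = c₂.erase n →
          (c₁ = μ ∧ c₂ = insert n μ) ∨ (c₁ = insert n μ ∧ c₂ = μ)) := by
  obtain ⟨hIne, hIC, hIint, hμI, hμmin, hiso⟩ := hI
  have hnC : ∀ c ∈ C, n ∉ c := by
    intro c hc h
    have := hn c hc h
    simp at this
  set CI := insert μ (C \ I) ∪ I.image (fun c => insert n c) with hCIdef
  -- classification of elements of CI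
  have hclass : ∀ c ∈ CI, (n ∉ c ∧ c ∈ C ∧ (c = μ ∨ c ∉ I)) ∨
      ∃ a ∈ I, c = insert n a ∧ n ∉ a := by
    intro c hc
    simp only [CI, Finset.mem_union, Finset.mem_insert, Finset.mem_sdiff,
      Finset.mem_image] at hc
    rcases hc with (rfl | ⟨h1, h2⟩) | ⟨a, ha, rfl⟩
    · exact Or.inl ⟨hnC _ (hIC hμI), hIC hμI, Or.inl rfl⟩
    · exact Or.inl ⟨hnC _ h1, h1, Or.inr h2⟩
    · exact Or.inr ⟨a, ha, rfl, hnC _ (hIC ha)⟩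
  have herase : ∀ c ∈ CI, c.erase n ∈ C := by
    intro c hc
    rcases hclass c hc with ⟨hn1, hc1, _⟩ | ⟨a, ha, rfl, hna⟩
    · rwa [Finset.erase_eq_of_notMem hn1]
    · rw [Finset.erase_insert hna]; exact hIC ha
  refine ⟨⟨herase, ?_⟩, ?_, ?_⟩
  · -- preimages of proper trunks are proper trunks
    rintro T ⟨⟨σ, rfl⟩, ⟨t, ht⟩, hTne⟩
    simp only [trunk, Finset.mem_filter] at ht
    obtain ⟨htC, hσt⟩ := ht
    have hnσ : n ∉ σ := fun h => hnC t htC (hσt h)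
    have key : ∀ c ∈ CI, ((c.erase n ∈ C ∧ σ ⊆ c.erase n) ↔ σ ⊆ c) := by
      intro c hc
      constructor
      · rintro ⟨-, hs⟩
        exact hs.trans (Finset.erase_subset n c)
      · intro hs
        refine ⟨herase c hc, fun x hx => Finset.mem_erase.2 ⟨fun h => hnσ (h ▸ hx), hs hx⟩⟩
    refine ⟨⟨σ, ?_⟩, ?_, ?_⟩
    · ext c
      simp only [trunk, Finset.mem_filter]
      exact and_congr_right fun hc => key c hc
    · -- nonempty
      by_cases htI : t ∈ I
      · refine ⟨insert n t, Finset.mem_filter.2 ⟨?_, ?_⟩⟩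
        · exact Finset.mem_union_right _ (Finset.mem_image_of_mem _ htI)
        · show (insert n t).erase n ∈ _
          rw [Finset.erase_insert (hnC t htC)]
          exact Finset.mem_filter.2 ⟨htC, hσt⟩
      · refine ⟨t, Finset.mem_filter.2 ⟨?_, ?_⟩⟩
        · exact Finset.mem_union_left _ (Finset.mem_insert_of_mem
            (Finset.mem_sdiff.2 ⟨htC, htI⟩))
        · show t.erase n ∈ _
          rw [Finset.erase_eq_of_notMem (hnC t htC)]
          exact Finset.mem_filter.2 ⟨htC, hσt⟩
    · -- proper
      intro hEq
      -- there is d ∈ C with ¬ σ ⊆ d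
      have : ∃ d ∈ C, ¬ σ ⊆ d := by
        by_contra h
        push_neg at h
        apply hTne
        ext c
        simp only [trunk, Finset.mem_filter]
        exact ⟨fun h' => h'.1, fun hc => ⟨hc, h c hc⟩⟩
      obtain ⟨d, hdC, hdσ⟩ := this
      by_cases hdI : d ∈ I
      · -- then ¬ σ ⊆ μ, and μ ∈ CI but μ ∉ filter
        have hσμ : ¬ σ ⊆ μ := fun h => hdσ (h.trans (hμmin d hdI))
        have hμCI : μ ∈ CI := Finset.mem_union_left _ (Finset.mem_insert_self _ _)
        rw [← hEq] at hμCI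
        have h2 := (Finset.mem_filter.1 hμCI).2
        simp only [trunk, Finset.mem_filter] at h2
        have hμCI' : μ ∈ CI := Finset.mem_union_left _ (Finset.mem_insert_self _ _)
        exact hσμ ((key μ hμCI').1 h2)
      · have hdCI : d ∈ CI := Finset.mem_union_left _ (Finset.mem_insert_of_mem
          (Finset.mem_sdiff.2 ⟨hdC, hdI⟩))
        have hdCI2 := hdCI
        rw [← hEq] at hdCI2
        have h2 := (Finset.mem_filter.1 hdCI2).2
        simp only [trunk, Finset.mem_filter] at h2
        exact hdσ ((key d hdCI).1 h2)
  · -- surjectivity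
    intro d hd
    by_cases hdI : d ∈ I
    · exact ⟨insert n d, Finset.mem_union_right _ (Finset.mem_image_of_mem _ hdI),
        Finset.erase_insert (hnC d hd)⟩
    · exact ⟨d, Finset.mem_union_left _ (Finset.mem_insert_of_mem
        (Finset.mem_sdiff.2 ⟨hd, hdI⟩)), Finset.erase_eq_of_notMem (hnC d hd)⟩
  · -- near-injectivity
    intro c₁ hc₁ c₂ hc₂ hne he
    rcases hclass c₁ hc₁ with ⟨hn1, hC1, hμ1⟩ | ⟨a₁, ha₁, rfl, hna₁⟩ <;>
      rcases hclass c₂ hc₂ with ⟨hn2, hC2, hμ2⟩ | ⟨a₂, ha₂, rfl, hna₂⟩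
    · exact absurd (by rwa [Finset.erase_eq_of_notMem hn1,
        Finset.erase_eq_of_notMem hn2] at he) hne
    · rw [Finset.erase_eq_of_notMem hn1, Finset.erase_insert hna₂] at he
      subst he
      rcases hμ1 with rfl | hnI
      · exact Or.inl ⟨rfl, rfl⟩
      · exact absurd ha₂ hnI
    · rw [Finset.erase_eq_of_notMem hn2, Finset.erase_insert hna₁] at he
      rcases hμ2 with rfl | hnI
      · exact Or.inr ⟨by rw [he], rfl⟩
      · exact absurd (he ▸ ha₁) hnI
    · rw [Finset.erase_insert hna₁, Finset.erase_insert hna₂] at he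
      exact absurd (by rw [he]) hne
end
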